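/- arXiv:math/0610046 — 3 statements merged into one kernel-verified Lean document; each statement's English description precedes it below -/
import Mathlib

section
/- Let φ ∈ L¹(ℝ) with p(s) = -log ∫_{|t|≥s} |φ(t)| dt finite for all s ≥ 0 and p(s)/s → ∞. Then for every s ≥ 0, H(s) := ∫_ℝ e^{|t|s} |φ(t)| dt = ‖φ‖_{L¹} + s ∫_0^∞ e^{ts - p(t)} dt, and in particular H(s) < ∞. -/
open MeasureTheory Real Set Filter

/-- If `φ ∈ L¹(ℝ)` has non-compact support (positive tails), `p(s) = -log ∫_{|t|≥s}|φ(t)|dt`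
is finite with `p(s)/s → ∞`, then for every `s ≥ 0` the function `e^{|t|s}|φ(t)|` is
integrable and `H(s) = ‖φ‖_{L¹} + s ∫_0^∞ e^{ts - p(t)} dt`. -/
theorem stmt2 (φ : ℝ → ℝ) (hφ : Integrable φ)
    (htail : ∀ s : ℝ, 0 ≤ s → 0 < ∫ t in {t : ℝ | s ≤ |t|}, |φ t|)
    (p : ℝ → ℝ) (hp : ∀ s, p s = -Real.log (∫ t in {t : ℝ | s ≤ |t|}, |φ t|))
    (hsuper : Tendsto (fun s => p s / s) atTop atTop) :
    ∀ s : ℝ, 0 ≤ s →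
      Integrable (fun t => Real.exp (|t| * s) * |φ t|) ∧
      (∫ t, Real.exp (|t| * s) * |φ t|) =
        (∫ t, |φ t|) + s * ∫ t in Set.Ioi (0 : ℝ), Real.exp (t * s - p t) := by
  intro s hs0
  rcases eq_or_lt_of_le hs0 with hs | hs
  · constructor
    · simpa [← hs] using hφ.abs
    · simp [← hs]
  -- now 0 < s
  have hφabs : Integrable (fun t => |φ t|) := hφ.abs
  set F : ℝ → ℝ := fun u => ∫ t in {t : ℝ | u ≤ |t|}, |φ t| with hFdef
  have hmS : ∀ u : ℝ, MeasurableSet {t : ℝ | u ≤ |t|} := fun u =>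
    measurableSet_le measurable_const measurable_abs
  have hFanti : Antitone F := by
    intro u v huv
    refine setIntegral_mono_set hφabs.integrableOn
      (Eventually.of_forall fun t => abs_nonneg _) (HasSubset.Subset.eventuallyLE ?_)
    intro t ht; exact le_trans huv ht
  have hFmeas : Measurable F := hFanti.measurable
  have hFexp : ∀ u : ℝ, 0 ≤ u → F u = Real.exp (-(p u)) := by
    intro u hu
    rw [hp, neg_neg, Real.exp_log (htail u hu)]
  have hpmeas : Measurable p := by
    have : p = fun u => -Real.log (F u) := funext fun u => hp u
    rw [this]
    exact (Real.measurable_log.comp hFmeas).neg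
  -- the weighted measure
  set μ : Measure ℝ := volume.withDensity (fun t => ENNReal.ofReal |φ t|) with hμdef
  have hdens : AEMeasurable (fun t => ENNReal.ofReal |φ t|) volume :=
    ENNReal.measurable_ofReal.comp_aemeasurable hφ.abs.aemeasurable
  have hμtail : ∀ t : ℝ, μ {a : ℝ | t ≤ |a|} = ENNReal.ofReal (F t) := by
    intro t
    rw [hμdef, withDensity_apply _ (hmS t),
      ← ofReal_integral_eq_lintegral_ofReal hφabs.integrableOn
        (Eventually.of_forall fun t => abs_nonneg _)]
  have hμuniv : μ Set.univ = ENNReal.ofReal (∫ t, |φ t|) := by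
    rw [hμdef, withDensity_apply _ MeasurableSet.univ, Measure.restrict_univ,
      ← ofReal_integral_eq_lintegral_ofReal hφabs
        (Eventually.of_forall fun t => abs_nonneg _)]
  -- interval integral evaluation
  have hIE : ∀ a : ℝ, ∫ u in (0:ℝ)..a, s * Real.exp (u * s) = Real.exp (a * s) - 1 := by
    intro a
    rw [intervalIntegral.integral_const_mul,
      intervalIntegral.integral_comp_mul_right (fun u => Real.exp u) hs.ne',
      integral_exp]
    field_simp
    rw [smul_eq_mul, mul_zero, Real.exp_zero, ← mul_assoc, mul_one_div_cancel hs.ne', one_mul]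
  -- layer cake
  have key : (∫⁻ ω, ENNReal.ofReal (Real.exp (|ω| * s) - 1) ∂μ)
      = ∫⁻ t in Set.Ioi (0:ℝ), μ {a : ℝ | t ≤ |a|} * ENNReal.ofReal (s * Real.exp (t * s)) := by
    have := lintegral_comp_eq_lintegral_meas_le_mul μ (f := fun t : ℝ => |t|)
      (g := fun u => s * Real.exp (u * s))
      (Eventually.of_forall fun a => abs_nonneg a) measurable_abs.aemeasurable
      (fun t _ => ((continuous_const.mul ((continuous_id.mul continuous_const).rexp)).intervalIntegrable _ _))
      (Eventually.of_forall fun t => by positivity)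
    simpa [hIE] using this
  -- rewrite RHS of key
  have keyRHS : (∫⁻ t in Set.Ioi (0:ℝ), μ {a : ℝ | t ≤ |a|} * ENNReal.ofReal (s * Real.exp (t * s)))
      = ∫⁻ t in Set.Ioi (0:ℝ), ENNReal.ofReal (s * Real.exp (t * s - p t)) := by
    refine setLIntegral_congr_fun measurableSet_Ioi (fun t ht => ?_)
    rw [hμtail t, hFexp t (le_of_lt ht), ← ENNReal.ofReal_mul (Real.exp_nonneg _)]
    congr 1
    rw [mul_comm, mul_assoc, ← Real.exp_add]
    ring_nf
  -- superlinearity bounds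
  obtain ⟨M, hM⟩ : ∃ M : ℝ, ∀ t ≥ M, s + 1 ≤ p t / t :=
    eventually_atTop.1 (hsuper.eventually (eventually_ge_atTop (s + 1)))
  set M' : ℝ := max M 1 with hM'def
  have hM'pos : (0:ℝ) < M' := lt_of_lt_of_le one_pos (le_max_right _ _)
  have hbound2 : ∀ t ∈ Set.Ioi M', Real.exp (t * s - p t) ≤ Real.exp (-t) := by
    intro t ht
    have ht1 : (1:ℝ) ≤ t := le_trans (le_max_right M 1) (le_of_lt ht)
    have ht0 : (0:ℝ) < t := lt_of_lt_of_le one_pos ht1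
    have hpt : (s + 1) * t ≤ p t :=
      (le_div_iff₀ ht0).mp (hM t (le_trans (le_max_left M 1) (le_of_lt ht)))
    apply Real.exp_le_exp.2
    nlinarith
  have hbound1 : ∀ t ∈ Set.Ioc (0:ℝ) M',
      Real.exp (t * s - p t) ≤ Real.exp (M' * s) * F 0 := by
    intro t ht
    have hFt : F t = Real.exp (-(p t)) := hFexp t (le_of_lt ht.1)
    have h1 : Real.exp (t * s - p t) = Real.exp (t * s) * F t := by
      rw [hFt, ← Real.exp_add]; ring_nf
    rw [h1]
    have h2 : Real.exp (t * s) ≤ Real.exp (M' * s) :=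
      Real.exp_le_exp.2 (mul_le_mul_of_nonneg_right ht.2 hs.le)
    have h3 : F t ≤ F 0 := hFanti ht.1.le
    have h4 : 0 ≤ F t := by rw [hFt]; exact Real.exp_nonneg _
    exact mul_le_mul h2 h3 h4 (Real.exp_nonneg _)
  -- finiteness
  have hfin2 : (∫⁻ t in Set.Ioi (0:ℝ), ENNReal.ofReal (Real.exp (t * s - p t))) < ⊤ := by
    rw [show Set.Ioi (0:ℝ) = Set.Ioc 0 M' ∪ Set.Ioi M' from
        (Set.Ioc_union_Ioi_eq_Ioi hM'pos.le).symm,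
      lintegral_union measurableSet_Ioi Set.Ioc_disjoint_Ioi_same]
    refine ENNReal.add_lt_top.2 ⟨?_, ?_⟩
    · calc ∫⁻ t in Set.Ioc (0:ℝ) M', ENNReal.ofReal (Real.exp (t * s - p t))
          ≤ ∫⁻ _ in Set.Ioc (0:ℝ) M', ENNReal.ofReal (Real.exp (M' * s) * F 0) :=
            setLIntegral_mono' measurableSet_Ioc fun t ht =>
              ENNReal.ofReal_le_ofReal (hbound1 t ht)
        _ = ENNReal.ofReal (Real.exp (M' * s) * F 0) * volume (Set.Ioc (0:ℝ) M') :=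
            setLIntegral_const _ _
        _ < ⊤ := ENNReal.mul_lt_top ENNReal.ofReal_lt_top measure_Ioc_lt_top
    · calc ∫⁻ t in Set.Ioi M', ENNReal.ofReal (Real.exp (t * s - p t))
          ≤ ∫⁻ t in Set.Ioi M', ENNReal.ofReal (Real.exp (-t)) :=
            setLIntegral_mono' measurableSet_Ioi fun t ht =>
              ENNReal.ofReal_le_ofReal (hbound2 t ht)
        _ < ⊤ := by
            have hI : IntegrableOn (fun t => Real.exp (-t)) (Set.Ioi M') := by
              simpa using exp_neg_integrableOn_Ioi M' one_pos
            exact hI.lintegral_lt_top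
  have hfin1 : (∫⁻ t in Set.Ioi (0:ℝ), ENNReal.ofReal (s * Real.exp (t * s - p t))) < ⊤ := by
    have h1 : (∫⁻ t in Set.Ioi (0:ℝ), ENNReal.ofReal (s * Real.exp (t * s - p t)))
        = ENNReal.ofReal s * ∫⁻ t in Set.Ioi (0:ℝ), ENNReal.ofReal (Real.exp (t * s - p t)) := by
      simp_rw [ENNReal.ofReal_mul hs.le]
      exact lintegral_const_mul' _ _ ENNReal.ofReal_ne_top
    rw [h1]
    exact ENNReal.mul_lt_top ENNReal.ofReal_lt_top hfin2
  -- splitting exp = (exp - 1) + 1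
  have hsplit : ∀ ω : ℝ, ENNReal.ofReal (Real.exp (|ω| * s)) =
      ENNReal.ofReal (Real.exp (|ω| * s) - 1) + 1 := by
    intro ω
    rw [← ENNReal.ofReal_one, ← ENNReal.ofReal_add
      (sub_nonneg.2 (Real.one_le_exp (by positivity))) zero_le_one]
    norm_num
  have hmain : (∫⁻ ω, ENNReal.ofReal (Real.exp (|ω| * s)) ∂μ)
      = (∫⁻ ω, ENNReal.ofReal (Real.exp (|ω| * s) - 1) ∂μ) + μ Set.univ := by
    simp_rw [hsplit]
    rw [lintegral_add_right _ measurable_const, lintegral_one]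
  -- withDensity conversion
  have hgmeas : Measurable (fun ω : ℝ => ENNReal.ofReal (Real.exp (|ω| * s))) :=
    ENNReal.measurable_ofReal.comp ((measurable_abs.mul_const s).exp)
  have hwd : (∫⁻ ω, ENNReal.ofReal (Real.exp (|ω| * s)) ∂μ)
      = ∫⁻ t, ENNReal.ofReal (Real.exp (|t| * s) * |φ t|) := by
    rw [hμdef, lintegral_withDensity_eq_lintegral_mul₀ hdens hgmeas.aemeasurable]
    congr 1
    funext t
    simp only [Pi.mul_apply]
    rw [← ENNReal.ofReal_mul (abs_nonneg _), mul_comm]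
  -- total identity at lintegral level
  have htotal : (∫⁻ t, ENNReal.ofReal (Real.exp (|t| * s) * |φ t|))
      = ENNReal.ofReal (∫ t, |φ t|)
        + ∫⁻ t in Set.Ioi (0:ℝ), ENNReal.ofReal (s * Real.exp (t * s - p t)) := by
    rw [← hwd, hmain, key, keyRHS, hμuniv, add_comm]
  have hfintot : (∫⁻ t, ENNReal.ofReal (Real.exp (|t| * s) * |φ t|)) < ⊤ := by
    rw [htotal]
    exact ENNReal.add_lt_top.2 ⟨ENNReal.ofReal_lt_top, hfin1⟩
  -- integrability of the main function
  have hAnn : 0 ≤ᵐ[volume] fun t => Real.exp (|t| * s) * |φ t| :=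
    Eventually.of_forall fun t => by positivity
  have hint : Integrable (fun t => Real.exp (|t| * s) * |φ t|) := by
    refine ⟨((continuous_abs.mul continuous_const).rexp.aestronglyMeasurable).mul
      hφabs.aestronglyMeasurable, ?_⟩
    rw [hasFiniteIntegral_iff_ofReal hAnn]
    exact hfintot
  -- integrability of the tail integrand
  have hintC : IntegrableOn (fun t => Real.exp (t * s - p t)) (Set.Ioi (0:ℝ)) := by
    refine ⟨(((measurable_id.mul_const s).sub hpmeas).exp).aestronglyMeasurable, ?_⟩
    rw [hasFiniteIntegral_iff_ofReal (Eventually.of_forall fun t => Real.exp_nonneg _)]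
    exact hfin2
  refine ⟨hint, ?_⟩
  -- convert lintegral identity back to real integrals
  have hC0 : 0 ≤ ∫ t in Set.Ioi (0:ℝ), Real.exp (t * s - p t) :=
    setIntegral_nonneg measurableSet_Ioi fun t _ => Real.exp_nonneg _
  have e1 : ENNReal.ofReal (∫ t, Real.exp (|t| * s) * |φ t|)
      = ∫⁻ t, ENNReal.ofReal (Real.exp (|t| * s) * |φ t|) :=
    ofReal_integral_eq_lintegral_ofReal hint hAnn
  have e2 : ENNReal.ofReal (∫ t in Set.Ioi (0:ℝ), Real.exp (t * s - p t))
      = ∫⁻ t in Set.Ioi (0:ℝ), ENNReal.ofReal (Real.exp (t * s - p t)) :=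
    ofReal_integral_eq_lintegral_ofReal hintC (Eventually.of_forall fun t => Real.exp_nonneg _)
  have e3 : (∫⁻ t in Set.Ioi (0:ℝ), ENNReal.ofReal (s * Real.exp (t * s - p t)))
      = ENNReal.ofReal s * ∫⁻ t in Set.Ioi (0:ℝ), ENNReal.ofReal (Real.exp (t * s - p t)) := by
    simp_rw [ENNReal.ofReal_mul hs.le]
    exact lintegral_const_mul' _ _ ENNReal.ofReal_ne_top
  have efinal : ENNReal.ofReal (∫ t, Real.exp (|t| * s) * |φ t|)
      = ENNReal.ofReal ((∫ t, |φ t|) + s * ∫ t in Set.Ioi (0:ℝ), Real.exp (t * s - p t)) := by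
    rw [e1, htotal, e3, ← e2, ← ENNReal.ofReal_mul hs.le,
      ← ENNReal.ofReal_add (integral_nonneg fun t => abs_nonneg _) (mul_nonneg hs.le hC0)]
  have hA0 : 0 ≤ ∫ t, Real.exp (|t| * s) * |φ t| := integral_nonneg fun t => by positivity
  exact (ENNReal.ofReal_eq_ofReal_iff hA0
    (add_nonneg (integral_nonneg fun t => abs_nonneg _) (mul_nonneg hs.le hC0))).mp efinal
end

section
/- Let φ ∈ L¹(ℝ) with non-compact support, p(s) = -log ∫_{|t|≥s}|φ(t)|dt satisfying p(s)/s → ∞, p* the Young dual of p, and G(s) = ∫_0^∞ e^{ts - p(t)} dt. Then liminf_{s→∞} (log G(s))/p*(s) ≥ 1. -/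
open MeasureTheory Real Set Filter

/-- For `φ ∈ L¹(ℝ)` with non-compact support, `p(s) = -log ∫_{|t|≥s}|φ(t)|dt` with
`p(s)/s → ∞`, `p*` the Young dual and `G(s) = ∫_0^∞ e^{ts - p(t)} dt`, one has
`liminf_{s→∞} (log G(s))/p*(s) ≥ 1`. -/
theorem stmt5 (φ : ℝ → ℝ) (hφ : Integrable φ)
    (htail : ∀ s : ℝ, 0 ≤ s → 0 < ∫ t in {t : ℝ | s ≤ |t|}, |φ t|)
    (p : ℝ → ℝ) (hp : ∀ s, p s = -Real.log (∫ t in {t : ℝ | s ≤ |t|}, |φ t|))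
    (hsuper : Tendsto (fun s => p s / s) atTop atTop)
    (q : ℝ → ℝ) (hq : ∀ s, q s = sSup ((fun t => s * t - p t) '' Set.Ici 0)) :
    1 ≤ Filter.liminf
      (fun s => Real.log (∫ t in Set.Ioi (0 : ℝ), Real.exp (t * s - p t)) / q s) atTop := by
  classical
  set G : ℝ → ℝ := fun s => ∫ t in Set.Ioi (0 : ℝ), Real.exp (t * s - p t) with hGdef
  set u : ℝ → ℝ := fun s => Real.log (G s) / q s with hudef
  set τ : ℝ → ℝ := fun s => ∫ t in {t : ℝ | s ≤ |t|}, |φ t| with hτdef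
  have habs : Integrable (fun t : ℝ => |φ t|) := hφ.abs
  -- tail is antitone
  have hτanti : Antitone τ := by
    intro a b hab
    refine setIntegral_mono_set habs.integrableOn
      (Filter.Eventually.of_forall fun t => abs_nonneg _)
      (Filter.Eventually.of_forall ?_)
    intro t ht
    exact le_trans hab ht
  have hpm : Measurable p := by
    have : p = fun s => -Real.log (τ s) := funext hp
    rw [this]
    exact (Real.measurable_log.comp hτanti.measurable).neg
  -- basic bounds on p
  set C : ℝ := ∫ t : ℝ, |φ t| with hCdef
  have hτC : ∀ t, τ t ≤ C :=
    fun t => setIntegral_le_integral habs (Filter.Eventually.of_forall fun x => abs_nonneg _)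
  set m : ℝ := -Real.log C with hmdef
  have hm : ∀ t : ℝ, 0 ≤ t → m ≤ p t := by
    intro t ht
    rw [hp]
    exact neg_le_neg (Real.log_le_log (htail t ht) (hτC t))
  have hpmono : ∀ a b : ℝ, 0 ≤ a → a ≤ b → p a ≤ p b := by
    intro a b ha hab
    rw [hp, hp]
    exact neg_le_neg (Real.log_le_log (htail b (ha.trans hab)) (hτanti hab))
  -- the set defining q is bounded above
  have hqbdd : ∀ s : ℝ, BddAbove ((fun t => s * t - p t) '' Set.Ici 0) := by
    intro s
    obtain ⟨T₀, hT₀⟩ := (hsuper.eventually_ge_atTop (|s| + 1)).exists_forall_of_atTop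
    refine ⟨|s| * max 1 T₀ + |m|, ?_⟩
    rintro x ⟨t, ht, rfl⟩
    simp only [Set.mem_Ici] at ht
    show s * t - p t ≤ |s| * max 1 T₀ + |m|
    have hmax : (0:ℝ) ≤ |s| * max 1 T₀ :=
      mul_nonneg (abs_nonneg s) (le_trans zero_le_one (le_max_left _ _))
    rcases le_or_gt t (max 1 T₀) with h | h
    · have h1 : s * t ≤ |s| * max 1 T₀ := by
        calc s * t ≤ |s| * t := mul_le_mul_of_nonneg_right (le_abs_self s) ht
          _ ≤ |s| * max 1 T₀ := mul_le_mul_of_nonneg_left h (abs_nonneg s)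
      have h2 : m ≤ p t := hm t ht
      have h3 : -|m| ≤ m := neg_abs_le m
      linarith
    · have htpos : (0 : ℝ) < t := lt_of_lt_of_le (lt_of_lt_of_le one_pos (le_max_left _ _)) h.le
      have h1 : |s| + 1 ≤ p t / t := hT₀ t ((le_max_right 1 T₀).trans h.le)
      have h2 : (|s| + 1) * t ≤ p t := (le_div_iff₀ htpos).mp h1
      have h3 : s * t ≤ |s| * t := mul_le_mul_of_nonneg_right (le_abs_self s) htpos.le
      have h4 : (0:ℝ) ≤ |m| := abs_nonneg m
      nlinarith
  have hqne : ∀ s : ℝ, ((fun t => s * t - p t) '' Set.Ici 0).Nonempty :=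
    fun s => Set.Nonempty.image _ Set.nonempty_Ici
  -- lower bound on q
  have hqlb : ∀ s t : ℝ, 0 ≤ t → s * t - p t ≤ q s := by
    intro s t ht
    rw [hq]
    exact le_csSup (hqbdd s) ⟨t, ht, rfl⟩
  -- q is monotone
  have hqmono : ∀ a b : ℝ, a ≤ b → q a ≤ q b := by
    intro a b hab
    rw [hq a]
    refine csSup_le (hqne a) ?_
    rintro x ⟨t, ht, rfl⟩
    simp only [Set.mem_Ici] at ht
    show a * t - p t ≤ q b
    calc a * t - p t ≤ b * t - p t := by
          have := mul_le_mul_of_nonneg_right hab ht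
          linarith
      _ ≤ q b := hqlb b t ht
  -- q grows superlinearly
  have hqdiv : Tendsto (fun s => q s / s) atTop atTop := by
    rw [tendsto_atTop]
    intro b
    filter_upwards [eventually_ge_atTop (max 1 |p (|b| + 1)|)] with s hs
    have hs1 : (1:ℝ) ≤ s := le_trans (le_max_left _ _) hs
    have hs0 : (0:ℝ) < s := lt_of_lt_of_le one_pos hs1
    have hsp : |p (|b| + 1)| ≤ s := le_trans (le_max_right _ _) hs
    have h1 : s * (|b| + 1) - p (|b| + 1) ≤ q s :=
      hqlb s (|b| + 1) (by positivity)
    have h2 : p (|b| + 1) ≤ s := le_trans (le_abs_self _) hsp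
    have h3 : b * s ≤ q s := by
      have hb : b ≤ |b| := le_abs_self b
      nlinarith
    rw [le_div_iff₀ hs0]
    linarith [h3]
  -- integrability of the integrand of G
  have hGint : ∀ s : ℝ, IntegrableOn (fun t => Real.exp (t * s - p t)) (Set.Ioi (0:ℝ)) := by
    intro s
    obtain ⟨T₀, hT₀⟩ := (hsuper.eventually_ge_atTop (s + 1)).exists_forall_of_atTop
    set T : ℝ := max 1 T₀ with hTdef
    have hT1 : (1:ℝ) ≤ T := le_max_left _ _
    have hmeas : AEStronglyMeasurable (fun t => Real.exp (t * s - p t)) (volume : Measure ℝ) :=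
      (((measurable_id.mul_const s).sub hpm).exp).aestronglyMeasurable
    have h1 : IntegrableOn (fun t => Real.exp (t * s - p t)) (Set.Ioc (0:ℝ) T) := by
      refine Integrable.mono' (g := fun _ => Real.exp (|s| * T - m))
        (integrableOn_const measure_Ioc_lt_top.ne) hmeas.restrict ?_
      rw [ae_restrict_iff' measurableSet_Ioc]
      refine Filter.Eventually.of_forall ?_
      intro t ht
      rcases ht with ⟨ht0, htT⟩
      rw [Real.norm_eq_abs, abs_of_pos (Real.exp_pos _), Real.exp_le_exp]
      have ha : t * s ≤ |s| * T := by
        calc t * s ≤ t * |s| := mul_le_mul_of_nonneg_left (le_abs_self s) ht0.le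
          _ ≤ T * |s| := mul_le_mul_of_nonneg_right htT (abs_nonneg s)
          _ = |s| * T := mul_comm _ _
      have hb := hm t ht0.le
      linarith
    have h2 : IntegrableOn (fun t => Real.exp (t * s - p t)) (Set.Ioi T) := by
      refine Integrable.mono' (g := fun t => Real.exp (-t))
        ?_ hmeas.restrict ?_
      · have := exp_neg_integrableOn_Ioi T (b := 1) one_pos
        exact (by simpa using this : IntegrableOn (fun t => Real.exp (-t)) (Set.Ioi T))
      · rw [ae_restrict_iff' measurableSet_Ioi]
        refine Filter.Eventually.of_forall ?_
        intro t ht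
        simp only [Set.mem_Ioi] at ht
        have htpos : (0:ℝ) < t := lt_of_le_of_lt (le_trans zero_le_one hT1) ht
        rw [Real.norm_eq_abs, abs_of_pos (Real.exp_pos _), Real.exp_le_exp]
        have h1 : s + 1 ≤ p t / t := hT₀ t ((le_max_right 1 T₀).trans ht.le)
        have h2 : (s + 1) * t ≤ p t := (le_div_iff₀ htpos).mp h1
        nlinarith
    have : Set.Ioi (0:ℝ) = Set.Ioc 0 T ∪ Set.Ioi T :=
      (Set.Ioc_union_Ioi_eq_Ioi (le_trans zero_le_one hT1)).symm
    rw [this]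
    exact h1.union h2
  -- eventual regime: lower bound on log G, positivity of q, G
  have hregime : ∀ᶠ s in atTop,
      q s - 1/2 - s ≤ Real.log (G s) ∧ 1 ≤ q s ∧ 1 ≤ s ∧ 0 < G s := by
    filter_upwards [eventually_ge_atTop (1:ℝ), hqdiv.eventually_ge_atTop (3 + |m|)]
      with s hs1 hs2
    have hs0 : (0:ℝ) < s := lt_of_lt_of_le one_pos hs1
    have hq2 : 2 * s + |m| + 1 ≤ q s := by
      rw [le_div_iff₀ hs0] at hs2
      nlinarith [abs_nonneg m]
    have hq1 : (1:ℝ) ≤ q s := by nlinarith [abs_nonneg m]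
    -- a near-maximizer
    have hlt : q s - 1/2 < sSup ((fun t => s * t - p t) '' Set.Ici 0) := by
      rw [← hq]; linarith
    obtain ⟨x, ⟨t, ht0, rfl⟩, hx⟩ := exists_lt_of_lt_csSup (hqne s) hlt
    simp only [Set.mem_Ici] at ht0
    -- the near-maximizer is ≥ 1
    have ht1 : (1:ℝ) ≤ t := by
      by_contra hcon
      push_neg at hcon
      have h1 : s * t ≤ s := by nlinarith
      have h2 : m ≤ p t := hm t ht0
      have h3 : -|m| ≤ m := neg_abs_le m
      linarith
    -- lower bound on the integral
    have hsub : Set.Ioc (t - 1) t ⊆ Set.Ioi (0:ℝ) := by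
      intro x hx
      rcases hx with ⟨hx1, _⟩
      have : (0:ℝ) ≤ t - 1 := by linarith
      exact lt_of_le_of_lt this hx1
    have hmono_int : (∫ x in Set.Ioc (t-1) t, Real.exp (x * s - p x)) ≤ G s := by
      refine setIntegral_mono_set (hGint s)
        (Filter.Eventually.of_forall fun x => (Real.exp_pos _).le)
        (Filter.Eventually.of_forall ?_)
      intro x hx
      exact hsub hx
    have hconst : Real.exp ((t-1) * s - p t) * 1 ≤
        ∫ x in Set.Ioc (t-1) t, Real.exp (x * s - p x) := by
      have hμ : (volume (Set.Ioc (t-1) t)).toReal = 1 := by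
        rw [Real.volume_Ioc]
        rw [ENNReal.toReal_ofReal (by linarith : (0:ℝ) ≤ t - (t-1))]
        ring
      have := setIntegral_ge_of_const_le_real (μ := volume) (c := Real.exp ((t-1) * s - p t))
        measurableSet_Ioc (by simp [Real.volume_Ioc]) ?_ ((hGint s).mono_set hsub)
      · rw [measureReal_def, hμ] at this
        simpa using this
      · intro x hx
        rcases hx with ⟨hx1, hx2⟩
        rw [Real.exp_le_exp]
        have hx0 : (0:ℝ) ≤ x := by
          have : (0:ℝ) ≤ t - 1 := by linarith
          linarith [hx1]
        have hps : p x ≤ p t := hpmono x t hx0 hx2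
        have : (t-1) * s ≤ x * s := mul_le_mul_of_nonneg_right hx1.le hs0.le
        linarith
    have hGpos : 0 < G s :=
      lt_of_lt_of_le (by positivity) (le_trans hconst hmono_int)
    refine ⟨?_, hq1, hs1, hGpos⟩
    rw [Real.le_log_iff_exp_le hGpos]
    calc Real.exp (q s - 1/2 - s) ≤ Real.exp ((t-1) * s - p t) := by
          rw [Real.exp_le_exp]; nlinarith
      _ = Real.exp ((t-1) * s - p t) * 1 := (mul_one _).symm
      _ ≤ G s := le_trans hconst hmono_int
  -- eventual lower bound for u
  have hev : ∀ᶠ s in atTop, 1 - (s + 1/2) / q s ≤ u s := by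
    filter_upwards [hregime] with s hs
    obtain ⟨hlog, hq1, hs1, hGpos⟩ := hs
    have hq0 : (0:ℝ) < q s := lt_of_lt_of_le one_pos hq1
    have heq : 1 - (s + 1/2) / q s = (q s - 1/2 - s) / q s := by
      field_simp
      ring
    rw [heq, hudef]
    exact div_le_div_of_nonneg_right hlog hq0.le
  -- the comparison function tends to 1
  have hv : Tendsto (fun s => 1 - (s + 1/2) / q s) atTop (nhds 1) := by
    have h1 : Tendsto (fun s => q s / (s + 1/2)) atTop atTop := by
      refine tendsto_atTop_mono' atTop ?_ ((hqdiv.atTop_div_const two_pos))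
      filter_upwards [eventually_ge_atTop (1:ℝ), hqdiv.eventually_ge_atTop 0]
        with s hs1 hs2
      have hs0 : (0:ℝ) < s := lt_of_lt_of_le one_pos hs1
      have hq0 : (0:ℝ) ≤ q s := by
        rw [le_div_iff₀ hs0] at hs2
        linarith
      rw [div_div]
      exact div_le_div_of_nonneg_left hq0 (by linarith) (by linarith)
    have h2 : Tendsto (fun s => (s + 1/2) / q s) atTop (nhds 0) := by
      have := h1.inv_tendsto_atTop
      convert this using 1
      funext s
      simp [inv_div]
    have := tendsto_const_nhds (x := (1:ℝ)) (f := atTop (α := ℝ)) |>.sub h2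
    simpa using this
  -- upper bound for G via q(s+δ)
  have hexpint : ∀ δ : ℝ, 0 < δ → (∫ t in Set.Ioi (0:ℝ), Real.exp (-δ * t)) = 1 / δ := by
    intro δ hδ
    have hderiv : ∀ x ∈ Set.Ioi (0:ℝ),
        HasDerivAt (fun t => -Real.exp (-δ * t) / δ) (Real.exp (-δ * x)) x := by
      intro x _
      have h1 : HasDerivAt (fun t : ℝ => -δ * t) (-δ) x := by
        simpa using (hasDerivAt_id x).const_mul (-δ)
      have h2 := (h1.exp).neg.div_const δ
      refine h2.congr_deriv ?_
      rw [mul_neg, neg_neg, mul_div_assoc, div_self hδ.ne', mul_one]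
    have hcont : ContinuousWithinAt (fun t => -Real.exp (-δ * t) / δ) (Set.Ici (0:ℝ)) 0 :=
      (Continuous.div_const ((continuous_const.mul continuous_id).rexp.neg) δ).continuousWithinAt
    have hint : IntegrableOn (fun t => Real.exp (-δ * t)) (Set.Ioi (0:ℝ)) :=
      exp_neg_integrableOn_Ioi 0 hδ
    have htend : Tendsto (fun t => -Real.exp (-δ * t) / δ) atTop (nhds 0) := by
      have h3 : Tendsto (fun t : ℝ => -δ * t) atTop atBot :=
        Tendsto.const_mul_atTop_of_neg (neg_neg_iff_pos.mpr hδ) tendsto_id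
      have h4 := (Real.tendsto_exp_atBot.comp h3).neg.div_const δ
      simpa using h4
    have := integral_Ioi_of_hasDerivAt_of_tendsto hcont hderiv hint htend
    rw [this]
    simp [Real.exp_zero]
    field_simp
  have hub : ∀ s : ℝ, ∀ δ : ℝ, 0 < δ → G s ≤ Real.exp (q (s + δ)) / δ := by
    intro s δ hδ
    have hle : G s ≤ ∫ t in Set.Ioi (0:ℝ), Real.exp (q (s + δ)) * Real.exp (-δ * t) := by
      refine setIntegral_mono_on (hGint s) ?_ measurableSet_Ioi ?_
      · exact (exp_neg_integrableOn_Ioi 0 hδ).const_mul _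
      · intro t ht
        simp only [Set.mem_Ioi] at ht
        rw [← Real.exp_add, Real.exp_le_exp]
        have := hqlb (s + δ) t ht.le
        nlinarith
    calc G s ≤ _ := hle
      _ = Real.exp (q (s + δ)) * ∫ t in Set.Ioi (0:ℝ), Real.exp (-δ * t) :=
        integral_const_mul _ _
      _ = Real.exp (q (s + δ)) / δ := by rw [hexpint δ hδ]; ring
  -- frequently q(s + e^{-q s}) ≤ 3 q s
  have hfr : ∃ᶠ s in atTop, q (s + Real.exp (-q s)) ≤ 3 * q s := by
    by_contra hcon
    rw [Filter.not_frequently] at hcon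
    have hq1ev : ∀ᶠ s in atTop, (1:ℝ) ≤ q s := by
      filter_upwards [eventually_ge_atTop (1:ℝ), hqdiv.eventually_ge_atTop 1] with s hs1 hs2
      have hs0 : (0:ℝ) < s := lt_of_lt_of_le one_pos hs1
      rw [le_div_iff₀ hs0] at hs2
      nlinarith
    obtain ⟨S, hS⟩ := (hcon.and hq1ev).exists_forall_of_atTop
    -- recursive sequence
    set g : ℕ → ℝ := fun n => Nat.rec S (fun _ x => x + Real.exp (-q x)) n with hgdef
    have hgstep : ∀ n, g (n+1) = g n + Real.exp (-q (g n)) := fun n => rfl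
    have hgS : ∀ n, S ≤ g n := by
      intro n
      induction n with
      | zero => exact le_refl S
      | succ k ih =>
        rw [hgstep]
        have := Real.exp_pos (-q (g k))
        linarith
    have hqg : ∀ n : ℕ, ((n : ℝ) + 1) ≤ q (g n) := by
      intro n
      induction n with
      | zero =>
        have := (hS S (le_refl S)).2
        show ((0:ℕ):ℝ) + 1 ≤ q S
        simpa using this
      | succ k ih =>
        have h1 := (hS (g k) (hgS k)).1
        push_neg at h1
        rw [hgstep]
        push_cast
        nlinarith [h1, ih]
    have hgb : ∀ n, g n ≤ S + 1 - (1/2)^n := by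
      intro n
      induction n with
      | zero =>
        show (S:ℝ) ≤ S + 1 - (1/2)^0
        norm_num
      | succ k ih =>
        rw [hgstep]
        have h1 : Real.exp (-q (g k)) ≤ Real.exp (-((k:ℝ) + 1)) :=
          Real.exp_le_exp.mpr (neg_le_neg (hqg k))
        have h2 : Real.exp (-((k:ℝ) + 1)) ≤ (1/2)^(k+1) := by
          have he : Real.exp (-(1:ℝ)) ≤ 1/2 := by
            have h2' : (2:ℝ) ≤ Real.exp 1 := by linarith [Real.exp_one_gt_d9]
            calc Real.exp (-(1:ℝ)) = (Real.exp 1)⁻¹ := Real.exp_neg 1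
              _ ≤ (2:ℝ)⁻¹ := inv_anti₀ (by norm_num) h2'
              _ = 1/2 := by norm_num
          have heq : Real.exp (-((k:ℝ) + 1)) = (Real.exp (-1))^(k+1) := by
            rw [← Real.exp_nat_mul]
            push_cast
            ring_nf
          rw [heq]
          exact pow_le_pow_left₀ (Real.exp_pos _).le he (k+1)
        have h3 : ((1:ℝ)/2)^(k+1) = (1/2)^k / 2 := by ring
        have h4 : ((1:ℝ)/2)^k ≥ 0 := by positivity
        calc g k + Real.exp (-q (g k)) ≤ S + 1 - (1/2)^k + (1/2)^(k+1) := by linarith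
          _ = S + 1 - (1/2)^(k+1) := by rw [h3]; ring
    -- contradiction via monotonicity
    obtain ⟨n, hn⟩ := exists_nat_gt (q (S + 1))
    have h1 : q (g n) ≤ q (S + 1) := by
      apply hqmono
      have := hgb n
      have h2 : (0:ℝ) ≤ (1/2:ℝ)^n := by positivity
      linarith
    have h2 := hqg n
    have : (n:ℝ) < (n:ℝ) + 1 := by linarith
    linarith
  -- frequently u ≤ 4
  have hfreq : ∃ᶠ s in atTop, u s ≤ 4 := by
    refine (hfr.and_eventually hregime).mono ?_
    rintro s ⟨hqs, hlog, hq1, hs1, hGpos⟩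
    have hq0 : (0:ℝ) < q s := lt_of_lt_of_le one_pos hq1
    set δ : ℝ := Real.exp (-q s) with hδdef
    have hδ0 : 0 < δ := Real.exp_pos _
    have h1 : G s ≤ Real.exp (q (s + δ)) / δ := hub s δ hδ0
    have h2 : Real.log (G s) ≤ q (s + δ) - Real.log δ := by
      calc Real.log (G s) ≤ Real.log (Real.exp (q (s + δ)) / δ) :=
            Real.log_le_log hGpos h1
        _ = q (s + δ) - Real.log δ := by
            rw [Real.log_div (Real.exp_ne_zero _) hδ0.ne', Real.log_exp]
    have h3 : Real.log δ = -q s := Real.log_exp _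
    have h4 : Real.log (G s) ≤ 4 * q s := by
      rw [h3] at h2
      linarith
    rw [hudef]
    rw [div_le_iff₀ hq0]
    linarith
  -- assemble
  have hcob : IsCoboundedUnder (· ≥ ·) atTop u :=
    IsCoboundedUnder.of_frequently_le hfreq
  have hbdd : IsBoundedUnder (· ≥ ·) atTop (fun s => 1 - (s + 1/2) / q s) :=
    hv.isBoundedUnder_ge
  calc (1:ℝ) = Filter.liminf (fun s => 1 - (s + 1/2) / q s) atTop := hv.liminf_eq.symm
    _ ≤ Filter.liminf u atTop := Filter.liminf_le_liminf hev hbdd hcob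
end

section
/- Let p : [0,∞) → ℝ be increasing with p(t)/t → ∞, and p*, p** the first and second Young duals. Suppose that for all γ < 1 sufficiently close to 1, the function t ↦ exp(-p(t) + (1/γ)p(γt)) is integrable on [0,∞). Then with G(s) = ∫_0^∞ e^{ts - p(t)} dt, one has lim_{s→∞} (log G(s))/p*(s) = 1. -/
set_option maxHeartbeats 800000


open MeasureTheory Real Set Filter

/-- Let `p : [0,∞) → ℝ` be increasing with `p(t)/t → ∞` and `p*` its Young dual. If for all
`γ < 1` close enough to `1` the function `t ↦ exp(-p(t) + (1/γ)p(γt))` is integrable on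
`[0,∞)`, then with `G(s) = ∫_0^∞ e^{ts - p(t)} dt`, `lim_{s→∞} (log G(s))/p*(s) = 1`. -/
theorem stmt7 (p : ℝ → ℝ) (hmono : MonotoneOn p (Set.Ici 0))
    (hsuper : Tendsto (fun t => p t / t) atTop atTop)
    (q : ℝ → ℝ) (hq : ∀ s, q s = sSup ((fun t => s * t - p t) '' Set.Ici 0))
    (hint : ∃ γ₀ : ℝ, γ₀ < 1 ∧ ∀ γ : ℝ, γ₀ < γ → γ < 1 →
      IntegrableOn (fun t => Real.exp (-p t + (1 / γ) * p (γ * t))) (Set.Ici 0)) :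
    Tendsto (fun s => Real.log (∫ t in Set.Ioi (0 : ℝ), Real.exp (t * s - p t)) / q s)
      atTop (nhds 1) := by
  obtain ⟨γ₀, hγ₀1, hint⟩ := hint
  set G : ℝ → ℝ := fun s => ∫ t in Set.Ioi (0:ℝ), Real.exp (t * s - p t) with hGdef
  -- measurable monotone extension of p
  set P : ℝ → ℝ := fun t => p (max t 0) with hPdef
  have hPmono : Monotone P := fun a b hab =>
    hmono (mem_Ici.2 (le_max_right a 0)) (mem_Ici.2 (le_max_right b 0)) (max_le_max hab le_rfl)
  have hPmeas : Measurable P := hPmono.measurable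
  have hPeq : ∀ t : ℝ, 0 ≤ t → P t = p t := fun t ht => by
    simp only [hPdef]; rw [max_eq_left ht]
  -- boundedness of the Young dual family
  have hbdd : ∀ s : ℝ, BddAbove ((fun t => s * t - p t) '' Set.Ici 0) := by
    intro s
    obtain ⟨T, hT⟩ := (tendsto_atTop.mp hsuper (|s| + 1)).exists_forall_of_atTop
    refine ⟨max 0 (|s| * (max T 1) - p 0), ?_⟩
    rintro x ⟨t, ht, rfl⟩
    simp only [mem_Ici] at ht
    by_cases h : t ≤ max T 1
    · have hp0 : p 0 ≤ p t := hmono (mem_Ici.2 le_rfl) (mem_Ici.2 ht) ht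
      have h1 : s * t ≤ |s| * t := mul_le_mul_of_nonneg_right (le_abs_self s) ht
      have h2 : |s| * t ≤ |s| * max T 1 := mul_le_mul_of_nonneg_left h (abs_nonneg s)
      have : s * t - p t ≤ |s| * max T 1 - p 0 := by linarith
      exact le_trans this (le_max_right _ _)
    · push_neg at h
      have htpos : (0:ℝ) < t := lt_of_lt_of_le (by norm_num : (0:ℝ) < 1)
        (le_of_lt (lt_of_le_of_lt (le_max_right T 1) h))
      have hTt : T ≤ t := le_of_lt (lt_of_le_of_lt (le_max_left T 1) h)
      have hdiv := hT t hTt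
      rw [le_div_iff₀ htpos] at hdiv
      have h1 : s * t ≤ |s| * t := mul_le_mul_of_nonneg_right (le_abs_self s) htpos.le
      have : s * t - p t ≤ 0 := by nlinarith
      exact le_trans this (le_max_left _ _)
  have hqge : ∀ s : ℝ, ∀ t : ℝ, 0 ≤ t → s * t - p t ≤ q s := by
    intro s t ht
    rw [hq s]
    exact le_csSup (hbdd s) ⟨t, mem_Ici.2 ht, rfl⟩
  -- q tends to infinity
  have hq1 : Tendsto q atTop atTop := by
    apply tendsto_atTop_mono (fun s => ?_) (tendsto_atTop_add_const_right atTop (-p 1) tendsto_id)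
    have := hqge s 1 zero_le_one
    simp only [id]
    linarith
  -- q s / s tends to infinity
  have hq2 : Tendsto (fun s => q s / s) atTop atTop := by
    rw [tendsto_atTop]
    intro b
    set T : ℝ := max b 0 + 1 with hTdef
    have hT0 : 0 ≤ T := by positivity
    filter_upwards [eventually_ge_atTop (max 1 (|p T|))] with s hs
    have hs1 : (1:ℝ) ≤ s := le_trans (le_max_left _ _) hs
    have hspT : |p T| ≤ s := le_trans (le_max_right _ _) hs
    have hspos : (0:ℝ) < s := lt_of_lt_of_le zero_lt_one hs1
    rw [le_div_iff₀ hspos]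
    have h1 := hqge s T hT0
    have h2 : s * b ≤ s * max b 0 := mul_le_mul_of_nonneg_left (le_max_left b 0) hspos.le
    have h3 : s * T = s * max b 0 + s := by rw [hTdef]; ring
    have h4 : p T ≤ |p T| := le_abs_self _
    linarith
  -- Young-type inequality
  have hkey : ∀ γ : ℝ, 0 < γ → ∀ s t : ℝ, 0 ≤ t →
      t * s - p t ≤ q s / γ + (-p t + (1/γ) * p (γ * t)) := by
    intro γ hγ s t ht
    have h1 : s * (γ * t) - p (γ * t) ≤ q s := hqge s (γ * t) (by positivity)
    have h2 : t * s ≤ q s / γ + (1/γ) * p (γ * t) := by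
      have heq : q s / γ + (1/γ) * p (γ * t) = (q s + p (γ * t)) / γ := by
        field_simp
      rw [heq, le_div_iff₀ hγ]
      nlinarith
    linarith
  -- integrability facts
  have hintOn : ∀ γ : ℝ, γ₀ < γ → γ < 1 →
      IntegrableOn (fun t => Real.exp (-p t + (1/γ) * p (γ * t))) (Set.Ioi 0) := by
    intro γ h1 h3
    exact (hint γ h1 h3).mono_set Ioi_subset_Ici_self
  have hintG : ∀ s : ℝ, IntegrableOn (fun t => Real.exp (t * s - p t)) (Set.Ioi 0) := by
    intro s
    set γ : ℝ := (max γ₀ 0 + 1)/2 with hγdef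
    have hm1 : max γ₀ 0 < 1 := max_lt hγ₀1 zero_lt_one
    have hγpos : 0 < γ := by
      have := le_max_right γ₀ 0; rw [hγdef]; linarith
    have hγ0 : γ₀ < γ := by
      have := le_max_left γ₀ 0; rw [hγdef]; linarith
    have hγ1 : γ < 1 := by rw [hγdef]; linarith
    have hC := hintOn γ hγ0 hγ1
    refine ((hC.const_mul (Real.exp (q s / γ))).mono' ?_ ?_)
    · have hmeas : Measurable fun t : ℝ => Real.exp (t * s - P t) :=
        (Real.measurable_exp.comp ((measurable_id.mul_const s).sub hPmeas))
      refine hmeas.aestronglyMeasurable.congr ?_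
      filter_upwards [ae_restrict_mem measurableSet_Ioi] with t ht
      rw [hPeq t (le_of_lt ht)]
    · filter_upwards [ae_restrict_mem measurableSet_Ioi] with t ht
      rw [Real.norm_eq_abs, Real.abs_exp, ← Real.exp_add]
      exact Real.exp_le_exp.mpr (hkey γ hγpos s t (le_of_lt ht))
  -- lower bound for G
  have hlow : ∀ s : ℝ, 0 ≤ s → ∀ u : ℝ, 1 ≤ u → Real.exp (s * u - p (u + 1)) ≤ G s := by
    intro s hs u hu
    have hsub : Set.Ioc u (u+1) ⊆ Set.Ioi (0:ℝ) := by
      intro t ht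
      exact lt_of_lt_of_le (by linarith [ht.1] : (0:ℝ) < u) ht.1.le
    have hvol : (volume (Set.Ioc u (u+1))).toReal = 1 := by
      rw [Real.volume_Ioc]; norm_num
    have step1 : Real.exp (s * u - p (u+1)) * (volume (Set.Ioc u (u+1))).toReal
        ≤ ∫ t in Set.Ioc u (u+1), Real.exp (t * s - p t) := by
      apply setIntegral_ge_of_const_le_real measurableSet_Ioc
      · rw [Real.volume_Ioc]; exact ENNReal.ofReal_ne_top
      · intro t ht
        apply Real.exp_le_exp.mpr
        have h1 : s * u ≤ t * s := by nlinarith [ht.1.le]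
        have h2 : p t ≤ p (u+1) := hmono (mem_Ici.2 (by linarith [ht.1] : (0:ℝ) ≤ t))
          (mem_Ici.2 (by linarith)) ht.2
        linarith
      · exact (hintG s).mono_set hsub
    have step2 : (∫ t in Set.Ioc u (u+1), Real.exp (t * s - p t))
        ≤ ∫ t in Set.Ioi (0:ℝ), Real.exp (t * s - p t) := by
      apply setIntegral_mono_set (hintG s)
        (Filter.Eventually.of_forall fun t => Real.exp_nonneg _)
        (HasSubset.Subset.eventuallyLE hsub)
    rw [hvol, mul_one] at step1
    exact le_trans step1 step2
  have hGpos : ∀ s : ℝ, 0 ≤ s → 0 < G s :=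
    fun s hs => lt_of_lt_of_le (Real.exp_pos _) (hlow s hs 1 le_rfl)
  -- lower bound on log G
  have hlog_low : ∀ s : ℝ, max 0 (|p 4| + |p 0| + 1) ≤ s → q s - s ≤ Real.log (G s) := by
    intro s hsbig
    have hs0 : (0:ℝ) ≤ s := le_trans (le_max_left _ _) hsbig
    have hs4 : |p 4| + |p 0| + 1 ≤ s := le_trans (le_max_right _ _) hsbig
    have hloglow : ∀ u : ℝ, 1 ≤ u → s * u - p (u + 1) ≤ Real.log (G s) := by
      intro u hu
      exact (Real.le_log_iff_exp_le (hGpos s hs0)).mpr (hlow s hs0 u hu)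
    have : q s ≤ Real.log (G s) + s := by
      rw [hq s]
      apply csSup_le ((Set.nonempty_Ici (a := (0:ℝ))).image _)
      rintro x ⟨t, ht, rfl⟩
      simp only [mem_Ici] at ht
      show s * t - p t ≤ Real.log (G s) + s
      by_cases h2 : 2 ≤ t
      · have h := hloglow (t - 1) (by linarith)
        have heq : t - 1 + 1 = t := by ring
        rw [heq] at h
        have hexp : s * t = s * (t - 1) + s := by ring
        linarith
      · push_neg at h2
        have h := hloglow 3 (by norm_num)
        have h1 : s * t ≤ s * 2 := mul_le_mul_of_nonneg_left h2.le hs0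
        have hp0 : p 0 ≤ p t := hmono (mem_Ici.2 le_rfl) (mem_Ici.2 ht) ht
        have h4 : p 4 ≤ |p 4| := le_abs_self _
        have h5 : -|p 0| ≤ p 0 := neg_abs_le _
        have heq : (3:ℝ) + 1 = 4 := by norm_num
        rw [heq] at h
        linarith
    linarith
  -- upper bound on log G
  have hlog_up : ∀ γ : ℝ, γ₀ < γ → 0 < γ → γ < 1 → ∀ s : ℝ, 0 ≤ s →
      Real.log (G s) ≤ q s / γ +
        Real.log (∫ t in Set.Ioi (0:ℝ), Real.exp (-p t + (1/γ) * p (γ * t))) := by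
    intro γ hγ0 hγpos hγ1 s hs
    set C : ℝ := ∫ t in Set.Ioi (0:ℝ), Real.exp (-p t + (1/γ) * p (γ * t)) with hCdef
    have hCint := hintOn γ hγ0 hγ1
    have hCpos : 0 < C := by
      rw [hCdef, setIntegral_pos_iff_support_of_nonneg_ae
        (Filter.Eventually.of_forall fun t => Real.exp_nonneg _) hCint]
      have hsupp : Function.support (fun t : ℝ => Real.exp (-p t + (1/γ) * p (γ * t))) =
          Set.univ := by
        ext t; simp [Real.exp_ne_zero]
      rw [hsupp, Set.univ_inter, Real.volume_Ioi]
      norm_num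
    have hle : G s ≤ Real.exp (q s / γ) * C := by
      rw [hCdef, ← integral_const_mul]
      apply setIntegral_mono_on (hintG s) (hCint.const_mul _) measurableSet_Ioi
      intro t ht
      rw [← Real.exp_add]
      exact Real.exp_le_exp.mpr (hkey γ hγpos s t (le_of_lt ht))
    calc Real.log (G s) ≤ Real.log (Real.exp (q s / γ) * C) :=
          Real.log_le_log (hGpos s hs) hle
      _ = q s / γ + Real.log C := by
          rw [Real.log_mul (Real.exp_ne_zero _) hCpos.ne', Real.log_exp]
  -- main argument
  rw [Metric.tendsto_nhds]
  intro ε hε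
  -- choice of γ
  set c : ℝ := max γ₀ (max (1/2) (1/(1 + ε/2))) with hcdef
  have hinv_lt : 1/(1 + ε/2) < 1 := by
    rw [div_lt_one (by linarith)]
    linarith
  have hc1 : c < 1 := by
    apply max_lt hγ₀1 (max_lt (by norm_num) hinv_lt)
  set γ : ℝ := (c + 1)/2 with hγdef
  have hcγ : c < γ := by rw [hγdef]; linarith
  have hchalf : (1:ℝ)/2 ≤ c := le_trans (le_max_left _ _) (le_max_right _ _)
  have hγpos : 0 < γ := by linarith
  have hγ0 : γ₀ < γ := lt_of_le_of_lt (le_max_left _ _) hcγ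
  have hγ1 : γ < 1 := by rw [hγdef]; linarith
  have hcinv : 1/(1 + ε/2) ≤ c := le_trans (le_max_right _ _) (le_max_right _ _)
  have hγinv : 1/γ < 1 + ε/2 := by
    rw [div_lt_iff₀ hγpos]
    have hpos : (0:ℝ) < 1 + ε/2 := by linarith
    have h1 : (1 + ε/2) * (1/(1 + ε/2)) = 1 := by field_simp
    have h2 : (1 + ε/2) * (1/(1 + ε/2)) < (1 + ε/2) * γ :=
      mul_lt_mul_of_pos_left (lt_of_le_of_lt hcinv hcγ) hpos
    nlinarith
  set C : ℝ := ∫ t in Set.Ioi (0:ℝ), Real.exp (-p t + (1/γ) * p (γ * t)) with hCdef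
  filter_upwards [eventually_ge_atTop (max 0 (|p 4| + |p 0| + 1)),
    eventually_ge_atTop (1:ℝ),
    hq1.eventually (eventually_ge_atTop (4 * (|Real.log C| + 1)/ε)),
    hq2.eventually (eventually_ge_atTop (2/ε + 1))] with s h0 h1 h2 h3
  have hs0 : (0:ℝ) ≤ s := le_trans zero_le_one h1
  have hspos : (0:ℝ) < s := lt_of_lt_of_le zero_lt_one h1
  have hqpos : 0 < q s := by
    have : (0:ℝ) < 4 * (|Real.log C| + 1)/ε := by positivity
    linarith
  -- upper bound
  have hup : Real.log (G s) / q s ≤ 1/γ + Real.log C / q s := by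
    have h := hlog_up γ hγ0 hγpos hγ1 s hs0
    rw [← hCdef] at h
    calc Real.log (G s) / q s ≤ (q s / γ + Real.log C) / q s :=
          (div_le_div_iff_of_pos_right hqpos).mpr h
      _ = 1/γ + Real.log C / q s := by field_simp
  have hlogC_small : Real.log C / q s ≤ ε/4 := by
    rw [div_le_iff₀ hqpos]
    have h2' : 4 * (|Real.log C| + 1) ≤ ε * q s := by
      rw [div_le_iff₀ hε] at h2
      linarith
    have := le_abs_self (Real.log C)
    nlinarith
  -- lower bound
  have hdown : 1 - s / q s ≤ Real.log (G s) / q s := by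
    have h := hlog_low s h0
    calc 1 - s / q s = (q s - s) / q s := by field_simp
      _ ≤ Real.log (G s) / q s := (div_le_div_iff_of_pos_right hqpos).mpr h
  have hs_small : s / q s ≤ ε/2 := by
    rw [div_le_iff₀ hqpos]
    have h3' : (2/ε + 1) * s ≤ q s := by
      rw [le_div_iff₀ hspos] at h3
      linarith
    have h4 : 2/ε * s + s ≤ q s := by nlinarith
    have h5 : 2 * s + ε * s ≤ ε * q s := by
      have := mul_le_mul_of_nonneg_left h4 hε.le
      have hc : ε * (2/ε * s) = 2 * s := by field_simp
      nlinarith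
    nlinarith [mul_pos hε hspos]
  rw [Real.dist_eq, abs_sub_lt_iff]
  constructor
  · have : Real.log (G s) / q s - 1 ≤ (1/γ - 1) + Real.log C / q s := by linarith
    linarith
  · linarith
end
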